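/- arXiv:hep-th/9902138 — 4 statements merged into one kernel-verified Lean document; each statement's English description precedes it below -/
import Mathlib

section
/- For nonnegative integers n₁, n₂, let d(n₁,n₂) := (n₁+1)(n₂+1)(n₁+n₂+2)/2. Then for all natural numbers N and all integers p ≥ 1: d(0,N+p)·d(0,N) = Σ_{k=0}^{N} d(k+p,k). -/
/-- The dimension of the irreducible SU(3)-representation D(n₁,n₂). -/
noncomputable def su3Dim (n₁ n₂ : ℕ) : ℚ :=
  ((n₁ : ℚ) + 1) * ((n₂ : ℚ) + 1) * ((n₁ : ℚ) + (n₂ : ℚ) + 2) / 2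

/-- dimension consistency of the quantization of the line bundle Lⁿ for
n = −p < 0: d(0,N+p)·d(0,N) = Σ_{k=0}^{N} d(k+p,k). -/
theorem quantized_line_bundle_dim_neg (N p : ℕ) (hp : 1 ≤ p) :
    su3Dim 0 (N + p) * su3Dim 0 N =
      ∑ k ∈ Finset.range (N + 1), su3Dim (k + p) k := by
  induction N with
  | zero => simp [su3Dim]
  | succ n ih =>
    rw [Finset.sum_range_succ, ← ih]
    simp only [su3Dim]
    push_cast
    ring
end

section
/- For nonnegative integers n₁, n₂, let d(n₁,n₂) := (n₁+1)(n₂+1)(n₁+n₂+2)/2. Then for all natural numbers m and N with N ≥ m+3: d(0,N)·( d(0,N−m) + d(0,N−m−3) − (N−m−1)(N−m+1) ) = (3/2)(N² + 3N + 2), where (N−m−1)(N−m+1) = d(1,N−m−2). -/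
/-- the index of the fuzzy Spin^c-Dirac operator D_m on fuzzy ℂP² of order
N ≥ m+3: d(0,N)·(d(0,N−m) + d(0,N−m−3) − (N−m−1)(N−m+1)) = (3/2)(N²+3N+2),
where (N−m−1)(N−m+1) = d(1,N−m−2). -/
theorem fuzzy_dirac_index (m N : ℕ) (hN : m + 3 ≤ N) :
    (su3Dim 0 N * (su3Dim 0 (N - m) + su3Dim 0 (N - m - 3) -
        ((N : ℚ) - (m : ℚ) - 1) * ((N : ℚ) - (m : ℚ) + 1)) =
      (3 / 2 : ℚ) * ((N : ℚ) ^ 2 + 3 * (N : ℚ) + 2)) ∧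
    ((N : ℚ) - (m : ℚ) - 1) * ((N : ℚ) - (m : ℚ) + 1) = su3Dim 1 (N - m - 2) := by
  have hm : m ≤ N := by omega
  have h3 : 3 ≤ N - m := by omega
  have h2 : 2 ≤ N - m := by omega
  have c1 : ((N - m : ℕ) : ℚ) = (N : ℚ) - (m : ℚ) := by push_cast [hm]; ring
  have c3 : ((N - m - 3 : ℕ) : ℚ) = (N : ℚ) - (m : ℚ) - 3 := by
    push_cast [Nat.cast_sub h3, hm]; ring
  have c2 : ((N - m - 2 : ℕ) : ℚ) = (N : ℚ) - (m : ℚ) - 2 := by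
    push_cast [Nat.cast_sub h2, hm]; ring
  constructor <;> simp only [su3Dim, c1, c2, c3] <;> push_cast <;> ring
end

section
/- For nonnegative integers n₁, n₂, let d(n₁,n₂) := (n₁+1)(n₂+1)(n₁+n₂+2)/2. Then for all natural numbers m and N with N ≥ m+3: d(0,N)·( d(0,N−m) + d(0,N−m−3) ) − Σ_{n=1}^{N−m−1} (n+1)(n+m+1)(n + (m+2)/2) − Σ_{n=0}^{N−m−3} (n+1)(n+m+4)(n + (m+5)/2) = ((N+2)/2)·(m² − 3mN + 2N² + 2N + 2). -/
lemma fuzzy_dirac_kernel_aux (m k : ℕ) :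
    su3Dim 0 (m + k + 3) * (su3Dim 0 (k + 3) + su3Dim 0 k) -
      (∑ n ∈ Finset.Icc 1 (k + 2),
        ((n : ℚ) + 1) * ((n : ℚ) + (m : ℚ) + 1) * ((n : ℚ) + ((m : ℚ) + 2) / 2)) -
      (∑ n ∈ Finset.range (k + 1),
        ((n : ℚ) + 1) * ((n : ℚ) + (m : ℚ) + 4) * ((n : ℚ) + ((m : ℚ) + 5) / 2)) =
    ((((m : ℚ) + (k : ℚ) + 3) + 2) / 2) *
      ((m : ℚ) ^ 2 - 3 * (m : ℚ) * ((m : ℚ) + (k : ℚ) + 3)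
        + 2 * ((m : ℚ) + (k : ℚ) + 3) ^ 2 + 2 * ((m : ℚ) + (k : ℚ) + 3) + 2) := by
  induction k with
  | zero =>
    rw [show Finset.Icc 1 2 = ({1, 2} : Finset ℕ) from rfl,
      Finset.sum_pair (show (1:ℕ) ≠ 2 by norm_num)]
    simp only [su3Dim, Finset.sum_range_succ, Finset.sum_range_zero]
    push_cast
    ring
  | succ k ih =>
    rw [show k + 1 + 2 = (k + 2) + 1 from rfl, Finset.sum_Icc_succ_top (by omega),
      Finset.sum_range_succ]
    simp only [su3Dim] at ih ⊢
    push_cast at ih ⊢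
    linear_combination ih

/-- the dimension of the kernel of the chiral part of the fuzzy
Spin^c-Dirac operator D_m on fuzzy ℂP² of order N ≥ m+3:
d(0,N)(d(0,N−m)+d(0,N−m−3)) − Σ_{n=1}^{N−m−1} (n+1)(n+m+1)(n+(m+2)/2)
  − Σ_{n=0}^{N−m−3} (n+1)(n+m+4)(n+(m+5)/2) = ((N+2)/2)(m²−3mN+2N²+2N+2). -/
theorem fuzzy_dirac_kernel_dim (m N : ℕ) (hN : m + 3 ≤ N) :
    su3Dim 0 N * (su3Dim 0 (N - m) + su3Dim 0 (N - m - 3)) -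
      (∑ n ∈ Finset.Icc 1 (N - m - 1),
        ((n : ℚ) + 1) * ((n : ℚ) + (m : ℚ) + 1) * ((n : ℚ) + ((m : ℚ) + 2) / 2)) -
      (∑ n ∈ Finset.range (N - m - 3 + 1),
        ((n : ℚ) + 1) * ((n : ℚ) + (m : ℚ) + 4) * ((n : ℚ) + ((m : ℚ) + 5) / 2)) =
    (((N : ℚ) + 2) / 2) *
      ((m : ℚ) ^ 2 - 3 * (m : ℚ) * (N : ℚ) + 2 * (N : ℚ) ^ 2 + 2 * (N : ℚ) + 2) := by
  obtain ⟨k, rfl⟩ : ∃ k, N = m + k + 3 := ⟨N - m - 3, by omega⟩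
  rw [show m + k + 3 - m = k + 3 by omega, show k + 3 - 3 = k from rfl,
    show k + 3 - 1 = k + 2 from rfl]
  have h := fuzzy_dirac_kernel_aux m k
  push_cast at h ⊢
  linear_combination h
end

section
/- For nonnegative integers n₁, n₂, let d(n₁,n₂) := (n₁+1)(n₂+1)(n₁+n₂+2)/2. Then for all natural numbers m and N with N ≥ m+3: d(0,N)·d(0,N−m) + d(0,N+2)·d(0,N−m−1) − d(0,N+1)·d(1,N−m−1) = (m+1)(m+2)/2. -/
/-- the index of the Dirac operator for the modified fuzzy spinor bundle
equals the classical index: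
d(0,N)·d(0,N−m) + d(0,N+2)·d(0,N−m−1) − d(0,N+1)·d(1,N−m−1) = (m+1)(m+2)/2. -/
theorem modified_fuzzy_dirac_index (m N : ℕ) (hN : m + 3 ≤ N) :
    su3Dim 0 N * su3Dim 0 (N - m) + su3Dim 0 (N + 2) * su3Dim 0 (N - m - 1) -
        su3Dim 0 (N + 1) * su3Dim 1 (N - m - 1) =
      ((m : ℚ) + 1) * ((m : ℚ) + 2) / 2 := by
  obtain ⟨k, rfl⟩ : ∃ k, N = m + 3 + k := ⟨N - (m + 3), by omega⟩
  have h1 : m + 3 + k - m = k + 3 := by omega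
  have h2 : k + 3 - 1 = k + 2 := by omega
  rw [h1, h2]
  simp only [su3Dim]
  push_cast
  ring
end
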